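/- arXiv:0709.3997 — 10 statements merged into one kernel-verified Lean document; each statement's English description precedes it below -/
import Mathlib

section
/- The image under the matrix exponential of the set of symmetric traceless real 2×2 matrices equals the set of symmetric real 2×2 matrices with determinant 1 and positive trace: exp({A ∈ M₂(ℝ) : Aᵀ = A, Tr A = 0}) = {s ∈ M₂(ℝ) : sᵀ = s, det s = 1, Tr s > 0}. -/
/-!
A real symmetric matrix is `U D Uᵀ` with `U` orthogonal and `D` diagonal, and the exponential acts
on the eigenvalues: `exp (U D Uᵀ) = U (exp D) Uᵀ`. Hence `exp A` is symmetric with eigenvalues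
`e^{λᵢ}`, so `det (exp A) = e^{tr A}` and `tr (exp A) > 0`. Conversely, a symmetric `2 × 2` matrix
with determinant `1` and positive trace has two eigenvalues of positive product and positive sum,
hence both positive, and it is the exponential of the symmetric matrix `U (log D) Uᵀ`, whose trace
is `log det = 0`.
-/

open Matrix Unitary

namespace Matrix

variable {n : Type*} [Fintype n] [DecidableEq n]

theorem trace_conjStarAlgAut {R : Type*} [CommRing R] [StarRing R]
    (U : unitary (Matrix n n R)) (B : Matrix n n R) :
    (conjStarAlgAut R _ U B).trace = B.trace := by
  rw [conjStarAlgAut_apply, trace_mul_cycle, Unitary.coe_star_mul_self, one_mul]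

theorem det_conjStarAlgAut {R : Type*} [CommRing R] [StarRing R]
    (U : unitary (Matrix n n R)) (B : Matrix n n R) :
    (conjStarAlgAut R _ U B).det = B.det := by
  rw [conjStarAlgAut_apply, det_mul_comm, ← mul_assoc, Unitary.coe_star_mul_self, one_mul]

theorem exp_conjStarAlgAut (U : unitary (Matrix n n ℝ)) (B : Matrix n n ℝ) :
    NormedSpace.exp (conjStarAlgAut ℝ _ U B) = conjStarAlgAut ℝ _ U (NormedSpace.exp B) :=
  exp_units_conj (toUnits U) B

namespace IsHermitian

section RCLike

variable {𝕜 : Type*} [RCLike 𝕜] {A : Matrix n n 𝕜} (hA : A.IsHermitian)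
include hA

theorem isHermitian_cfc (f : ℝ → ℝ) : (hA.cfc f).IsHermitian :=
  hA.cfc_eq f ▸ cfc_predicate f A

theorem trace_cfc (f : ℝ → ℝ) : (hA.cfc f).trace = ∑ i, (f (hA.eigenvalues i) : 𝕜) := by
  rw [IsHermitian.cfc, trace_conjStarAlgAut, trace_diagonal]
  rfl

theorem det_cfc (f : ℝ → ℝ) : (hA.cfc f).det = ∏ i, (f (hA.eigenvalues i) : 𝕜) := by
  rw [IsHermitian.cfc, det_conjStarAlgAut, det_diagonal]
  rfl

end RCLike

section Real

variable {A : Matrix n n ℝ} (hA : A.IsHermitian)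
include hA

theorem exp_cfc (f : ℝ → ℝ) : NormedSpace.exp (hA.cfc f) = hA.cfc (Real.exp ∘ f) := by
  rw [IsHermitian.cfc, IsHermitian.cfc, exp_conjStarAlgAut, exp_diagonal, Pi.exp_def,
    ← Real.exp_eq_exp_ℝ]
  rfl

theorem exp_eq_cfc_exp : NormedSpace.exp A = hA.cfc Real.exp := by
  conv_lhs => rw [hA.spectral_theorem]
  exact hA.exp_cfc id

theorem det_exp : (NormedSpace.exp A).det = Real.exp A.trace := by
  rw [hA.exp_eq_cfc_exp, hA.det_cfc, hA.trace_eq_sum_eigenvalues]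
  simp [Real.exp_sum]

theorem trace_exp_pos [Nonempty n] : 0 < (NormedSpace.exp A).trace := by
  rw [hA.exp_eq_cfc_exp, hA.trace_cfc]
  exact Finset.sum_pos (fun i _ ↦ Real.exp_pos _) Finset.univ_nonempty

theorem exists_isHermitian_exp_eq (hpos : ∀ i, 0 < hA.eigenvalues i) :
    ∃ B : Matrix n n ℝ, B.IsHermitian ∧ B.trace = Real.log A.det ∧ NormedSpace.exp B = A := by
  refine ⟨hA.cfc Real.log, hA.isHermitian_cfc _, ?_, ?_⟩
  · rw [hA.trace_cfc, hA.det_eq_prod_eigenvalues]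
    simp [Real.log_prod fun i _ ↦ (hpos i).ne']
  · conv_rhs => rw [hA.spectral_theorem]
    rw [hA.exp_cfc, IsHermitian.cfc]
    congr 2
    ext i
    simp [Real.exp_log (hpos i)]

end Real

theorem eigenvalues_pos_of_det_pos_of_trace_pos {A : Matrix (Fin 2) (Fin 2) ℝ}
    (hA : A.IsHermitian) (hdet : 0 < A.det) (htr : 0 < A.trace) : ∀ i, 0 < hA.eigenvalues i := by
  rw [hA.det_eq_prod_eigenvalues, Fin.prod_univ_two] at hdet
  rw [hA.trace_eq_sum_eigenvalues, Fin.sum_univ_two] at htr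
  obtain ⟨h0, h1⟩ | ⟨h0, h1⟩ := pos_and_pos_or_neg_and_neg_of_mul_pos hdet
  · exact fun i ↦ by fin_cases i <;> assumption
  · simp only [RCLike.ofReal_real_eq_id, id_eq] at h0 h1 htr
    linarith

end IsHermitian

end Matrix

/-- The image under the matrix exponential of the set of symmetric traceless real 2×2
matrices equals the set of symmetric real 2×2 matrices with determinant 1 and
positive trace. -/
theorem exp_image_symm_traceless :
    NormedSpace.exp '' {A : Matrix (Fin 2) (Fin 2) ℝ | Aᵀ = A ∧ A.trace = 0}
      = {s : Matrix (Fin 2) (Fin 2) ℝ | sᵀ = s ∧ s.det = 1 ∧ 0 < s.trace} := by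
  ext s
  constructor
  · rintro ⟨A, ⟨hsym, htr⟩, rfl⟩
    have hA : A.IsHermitian := isHermitian_iff_isSymm.mpr hsym
    exact ⟨by rw [← exp_transpose, hsym], by rw [hA.det_exp, htr, Real.exp_zero],
      hA.trace_exp_pos⟩
  · rintro ⟨hsym, hdet, htr⟩
    have hs : s.IsHermitian := isHermitian_iff_isSymm.mpr hsym
    obtain ⟨B, hB, hBtr, rfl⟩ := hs.exists_isHermitian_exp_eq
      (hs.eigenvalues_pos_of_det_pos_of_trace_pos (hdet ▸ one_pos) htr)
    exact ⟨B, ⟨isHermitian_iff_isSymm.mp hB, by rw [hBtr, hdet, Real.log_one]⟩, rfl⟩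
end

section
/- For all θ, c, t ∈ ℝ, setting ν = √(1+c²), one has the matrix identity exp(t(cos θ·p1 + sin θ·p2 + c·k))·exp(−t·c·k) = [[α, β], [−conj(β), conj(α)]], where α = cos(ct/2)cos(νt/2) + (c/ν)sin(ct/2)sin(νt/2) + i·((c/ν)cos(ct/2)sin(νt/2) − sin(ct/2)cos(νt/2)) and β = (1/ν)sin(νt/2)·(cos(ct/2 + θ) + i·sin(ct/2 + θ)). -/
open Matrix Complex

noncomputable def p1 : Matrix (Fin 2) (Fin 2) ℂ := (1/2 : ℂ) • !![0, 1; -1, 0]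
noncomputable def p2 : Matrix (Fin 2) (Fin 2) ℂ := (1/2 : ℂ) • !![0, I; I, 0]
noncomputable def k : Matrix (Fin 2) (Fin 2) ℂ := (1/2 : ℂ) • !![I, 0; 0, -I]

/-!
The generator `X = cos θ • p1 + sin θ • p2 + c • k` is traceless with determinant `ν² / 4`, so by
Cayley–Hamilton `X² = -(ν / 2)²`. Hence `(2 / ν) • X` squares to `-1`, and the `ℝ`-algebra map
`ℂ → M₂(ℂ)` sending `i` to it commutes with `exp`; Euler's formula then gives
`exp (t • X) = cos (ν t / 2) + (2 / ν) sin (ν t / 2) • X`. The same argument applies to `k` (with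
`ν = 1`), and the product of the two closed forms is computed entrywise.
-/

theorem NormedSpace.exp_smul_of_mul_self_eq_neg_one {A : Type*} [NormedRing A] [NormedAlgebra ℝ A]
    [Algebra ℚ A] {u : A} (hu : u * u = -1) (x : ℝ) :
    NormedSpace.exp (x • u) = Real.cos x • 1 + Real.sin x • u := by
  let φ := Complex.liftAux u hu
  have hφ : Continuous φ := by
    have : ⇑φ = fun z ↦ algebraMap ℝ A z.re + z.im • u := funext (Complex.liftAux_apply u hu)
    rw [this]
    fun_prop
  calc NormedSpace.exp (x • u) = NormedSpace.exp (φ (x * I)) := by simp [φ, Complex.liftAux_apply]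
    _ = φ (Complex.exp (x * I)) := by rw [Complex.exp_eq_exp_ℂ, map_exp φ hφ]
    _ = Real.cos x • 1 + Real.sin x • u := by
      simp [φ, Complex.liftAux_apply, Complex.exp_ofReal_mul_I_re, Complex.exp_ofReal_mul_I_im,
        Algebra.algebraMap_eq_smul_one]

theorem Matrix.mul_self_eq_neg_det_smul_one {R : Type*} [CommRing R] {M : Matrix (Fin 2) (Fin 2) R}
    (h : M.trace = 0) : M * M = -(M.det • 1) := by
  have h11 : M 1 1 = -M 0 0 := eq_neg_of_add_eq_zero_right (by rwa [trace_fin_two] at h)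
  ext i j
  fin_cases i <;> fin_cases j <;> simp [mul_apply, det_fin_two, h11] <;> ring

theorem Matrix.exp_smul_of_trace_eq_zero {R : Type*} [NormedCommRing R] [NormedAlgebra ℝ R]
    [Algebra ℚ R] {M : Matrix (Fin 2) (Fin 2) R} (htr : M.trace = 0) {r : ℝ} (hr : r ≠ 0)
    (hdet : M.det = algebraMap ℝ R (r ^ 2)) (s : ℝ) :
    NormedSpace.exp (s • M) = Real.cos (s * r) • 1 + (Real.sin (s * r) / r) • M := by
  -- `exp` only sees the topology, so any algebra norm inducing it may be used
  let _ : NormedRing (Matrix (Fin 2) (Fin 2) R) := Matrix.linftyOpNormedRing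
  let _ : NormedAlgebra ℝ (Matrix (Fin 2) (Fin 2) R) := Matrix.linftyOpNormedAlgebra
  have hu : (r⁻¹ • M) * (r⁻¹ • M) = -1 := by
    rw [smul_mul_smul_comm, mul_self_eq_neg_det_smul_one htr, hdet, algebraMap_smul, smul_neg,
      smul_smul]
    field_simp
    simp
  have h := NormedSpace.exp_smul_of_mul_self_eq_neg_one hu (s * r)
  rw [smul_smul, mul_assoc, mul_inv_cancel₀ hr, mul_one, smul_smul, ← div_eq_mul_inv] at h
  exact h

noncomputable def geodesicGenerator (θ c : ℝ) : Matrix (Fin 2) (Fin 2) ℂ :=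
  (Real.cos θ : ℂ) • p1 + (Real.sin θ : ℂ) • p2 + (c : ℂ) • k

theorem trace_geodesicGenerator (θ c : ℝ) : (geodesicGenerator θ c).trace = 0 := by
  simp [geodesicGenerator, p1, p2, k, trace_fin_two]

theorem det_geodesicGenerator (θ c : ℝ) :
    (geodesicGenerator θ c).det = algebraMap ℝ ℂ ((√(1 + c ^ 2) / 2) ^ 2) := by
  rw [div_pow, Real.sq_sqrt (by positivity)]
  simp [geodesicGenerator, p1, p2, k, det_fin_two]
  linear_combination (-(c : ℂ) ^ 2 / 4 - sin (θ : ℂ) ^ 2 / 4) * I_sq + sin_sq_add_cos_sq (θ : ℂ) / 4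

theorem trace_k : k.trace = 0 := by
  simp [k, trace_fin_two]

theorem det_k : k.det = algebraMap ℝ ℂ ((1 / 2) ^ 2) := by
  simp [k, det_fin_two]
  linear_combination (-1 / 4 : ℂ) * I_sq

/-- Explicit expression of the geodesics of the `k ⊕ p` problem on `SU(2)`. -/
theorem su2_geodesic_formula (θ c t : ℝ) :
    NormedSpace.exp ((t : ℂ) • ((Real.cos θ : ℂ) • p1 + (Real.sin θ : ℂ) • p2 + (c : ℂ) • k))
        * NormedSpace.exp ((-(t * c) : ℂ) • k) =
      let ν : ℝ := Real.sqrt (1 + c ^ 2)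
      let α : ℂ :=
        (↑(Real.cos (c * t / 2) * Real.cos (ν * t / 2)
            + c / ν * Real.sin (c * t / 2) * Real.sin (ν * t / 2)) : ℂ)
          + I * (↑(c / ν * Real.cos (c * t / 2) * Real.sin (ν * t / 2)
            - Real.sin (c * t / 2) * Real.cos (ν * t / 2)) : ℂ)
      let β : ℂ :=
        (↑(1 / ν * Real.sin (ν * t / 2)) : ℂ)
          * ((↑(Real.cos (c * t / 2 + θ)) : ℂ) + I * (↑(Real.sin (c * t / 2 + θ)) : ℂ))
      !![α, β; -(starRingEnd ℂ) β, (starRingEnd ℂ) α] := by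
  show NormedSpace.exp ((t : ℂ) • geodesicGenerator θ c) * _ = _
  dsimp only
  set ν := √(1 + c ^ 2)
  have hν : ν ≠ 0 := (Real.sqrt_pos.2 (by positivity)).ne'
  rw [show (-(t * c) : ℂ) = ((-(t * c) : ℝ) : ℂ) by push_cast; rfl, Complex.coe_smul,
    Complex.coe_smul,
    exp_smul_of_trace_eq_zero (trace_geodesicGenerator θ c) (div_ne_zero hν two_ne_zero)
      (det_geodesicGenerator θ c),
    exp_smul_of_trace_eq_zero trace_k one_half_pos.ne' det_k,
    show t * (ν / 2) = ν * t / 2 by ring, show -(t * c) * (1 / 2) = -(c * t / 2) by ring,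
    Real.cos_neg, Real.sin_neg]
  simp only [map_add, map_mul, conj_ofReal, conj_I]
  ext i j
  fin_cases i <;> fin_cases j <;>
    simp [geodesicGenerator, p1, p2, k, mul_apply, Fin.sum_univ_two, Real.cos_add, Real.sin_add] <;>
    ring_nf <;> simp only [I_sq] <;> ring
end

section
/- For all θ, c, t ∈ ℝ, setting ν = √(1+c²), K1 = (1+(1+2c²)cos(νt))/(2(1+c²)), K2 = (1−cos(νt))/(2(1+c²)), K3 = sin(νt)/ν, K4 = c(1−cos(νt))/(1+c²), one has the matrix identity exp(t(cos θ·P1 + sin θ·P2 + c·K))·exp(−t·c·K) = M, where M is the real 3×3 matrix with entries M₁₁ = K1·cos(ct)+K2·cos(2θ+ct)+K3·c·sin(ct), M₁₂ = K1·sin(ct)+K2·sin(2θ+ct)−K3·c·cos(ct), M₁₃ = K4·cos θ + K3·sin θ, M₂₁ = −K1·sin(ct)+K2·sin(2θ+ct)+K3·c·cos(ct), M₂₂ = K1·cos(ct)−K2·cos(2θ+ct)+K3·c·sin(ct), M₂₃ = −K3·cos θ + K4·sin θ, M₃₁ = K4·cos(θ+ct)−K3·sin(θ+ct), M₃₂ =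 K3·cos(θ+ct)+K4·sin(θ+ct), M₃₃ = (cos(νt)+c²)/(1+c²). -/
/-!
With `u = (cos θ, sin θ, c)`, the generator `cos θ • P1 + sin θ • P2 + c • K` is the
cross-product matrix `[u]ₓ` of `u`, and `K = [e₃]ₓ`. A cross-product matrix satisfies
`[u]ₓ² = u uᵀ - |u|² I`, hence `[u]ₓ³ = -|u|² [u]ₓ`, and for such a matrix the exponential
series collapses to Rodrigues' formula
`exp (t [u]ₓ) = cos (ν t) I + (sin (ν t) / ν) [u]ₓ + ((1 - cos (ν t)) / ν²) u uᵀ`, `ν = |u|`.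
Here `|u|² = 1 + c²`, and `exp (-t c K)` is the rotation by `-c t` about the third axis;
multiplying the two out and expanding with the angle-addition formulas gives the entries.
-/

open Matrix Real

noncomputable def P1 : Matrix (Fin 3) (Fin 3) ℝ := !![0, 0, 0; 0, 0, -1; 0, 1, 0]
noncomputable def P2 : Matrix (Fin 3) (Fin 3) ℝ := !![0, 0, 1; 0, 0, 0; -1, 0, 0]
noncomputable def K : Matrix (Fin 3) (Fin 3) ℝ := !![0, -1, 0; 1, 0, 0; 0, 0, 0]

section BanachAlgebra

variable {𝔸 : Type*} [NormedRing 𝔸] [NormedAlgebra ℝ 𝔸] [CompleteSpace 𝔸]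

theorem eq_exp_smul_of_hasDerivAt {A : 𝔸} {f : ℝ → 𝔸}
    (hf : ∀ s, HasDerivAt f (A * f s) s) (hf₀ : f 0 = 1) (t : ℝ) :
    f t = NormedSpace.exp (t • A) := by
  have hg (s : ℝ) : HasDerivAt (fun u : ℝ => NormedSpace.exp (-(u • A)) * f u) 0 s := by
    have := (hasDerivAt_exp_smul_const (-A) s).mul (hf s)
    simp only [smul_neg, mul_neg, neg_mul, mul_assoc, neg_add_cancel] at this
    exact this
  have hconst : NormedSpace.exp (-(t • A)) * f t = 1 := by
    simpa [hf₀] using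
      is_const_of_deriv_eq_zero (fun s => (hg s).differentiableAt) (fun s => (hg s).deriv) t 0
  have hmem (x : 𝔸) : x ∈ Metric.eball 0 (NormedSpace.expSeries ℝ 𝔸).radius :=
    (NormedSpace.expSeries_radius_eq_top ℝ 𝔸).symm ▸ edist_lt_top _ _
  have hinv : NormedSpace.exp (t • A) * NormedSpace.exp (-(t • A)) = 1 := by
    rw [← NormedSpace.exp_add_of_commute_of_mem_ball (Commute.refl _).neg_right (hmem _)
      (hmem _), add_neg_cancel, NormedSpace.exp_zero]
  rw [← one_mul (f t), ← hinv, mul_assoc, hconst, mul_one]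

theorem exp_smul_eq_of_mul_self_mul_self {A : 𝔸} {ν : ℝ} (hν : ν ≠ 0)
    (hA : A * A * A = -ν ^ 2 • A) (t : ℝ) :
    NormedSpace.exp (t • A) =
      1 + (sin (ν * t) / ν) • A + ((1 - cos (ν * t)) / ν ^ 2) • (A * A) := by
  set f : ℝ → 𝔸 := fun u => 1 + (sin (ν * u) / ν) • A + ((1 - cos (ν * u)) / ν ^ 2) • (A * A)
  suffices hf : ∀ s, HasDerivAt f (A * f s) s from
    (eq_exp_smul_of_hasDerivAt hf (by simp [f]) t).symm
  intro s
  have hlin : HasDerivAt (fun u => ν * u) ν s := by simpa using (hasDerivAt_id s).const_mul ν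
  have hsin : HasDerivAt (fun u => sin (ν * u) / ν) (cos (ν * s)) s :=
    (hlin.sin.div_const ν).congr_deriv (by field_simp)
  have hcos : HasDerivAt (fun u => (1 - cos (ν * u)) / ν ^ 2) (sin (ν * s) / ν) s :=
    ((hlin.cos.const_sub 1).div_const (ν ^ 2)).congr_deriv (by field_simp)
  refine (((hsin.smul_const A).const_add 1).add (hcos.smul_const (A * A))).congr_deriv ?_
  rw [mul_add, mul_add, mul_one, mul_smul_comm, mul_smul_comm, ← mul_assoc, hA, smul_smul,
    show (1 - cos (ν * s)) / ν ^ 2 * -ν ^ 2 = cos (ν * s) - 1 by field_simp; ring]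
  module

end BanachAlgebra

section CrossMatrix

variable {R : Type*} [CommRing R]

def crossMatrix (u : Fin 3 → R) : Matrix (Fin 3) (Fin 3) R :=
  !![0, -u 2, u 1; u 2, 0, -u 0; -u 1, u 0, 0]

theorem crossMatrix_mul_self (u : Fin 3 → R) :
    crossMatrix u * crossMatrix u = vecMulVec u u - (u ⬝ᵥ u) • 1 := by
  ext i j
  fin_cases i <;> fin_cases j <;>
    simp [crossMatrix, Matrix.mul_apply, Fin.sum_univ_three, vecMulVec_apply, dotProduct] <;> ring

theorem crossMatrix_mul_self_mul_self (u : Fin 3 → R) :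
    crossMatrix u * crossMatrix u * crossMatrix u = -(u ⬝ᵥ u) • crossMatrix u := by
  ext i j
  fin_cases i <;> fin_cases j <;>
    simp [crossMatrix, Matrix.mul_apply, Fin.sum_univ_three, dotProduct] <;> ring

end CrossMatrix

theorem smul_P1_add_smul_P2_add_smul_K (x y z : ℝ) :
    x • P1 + y • P2 + z • K = crossMatrix ![x, y, z] := by
  ext i j
  fin_cases i <;> fin_cases j <;> simp [P1, P2, K, crossMatrix]

theorem K_eq_crossMatrix : K = crossMatrix ![0, 0, 1] := by
  ext i j
  fin_cases i <;> fin_cases j <;> simp [K, crossMatrix]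

section

-- Any submultiplicative norm will do: `NormedSpace.exp` itself does not depend on it.
attribute [local instance] Matrix.linftyOpNormedRing Matrix.linftyOpNormedAlgebra

theorem exp_smul_crossMatrix {u : Fin 3 → ℝ} {ν : ℝ} (hν : ν ≠ 0) (hu : u ⬝ᵥ u = ν ^ 2)
    (t : ℝ) :
    NormedSpace.exp (t • crossMatrix u) =
      cos (ν * t) • 1 + (sin (ν * t) / ν) • crossMatrix u +
        ((1 - cos (ν * t)) / ν ^ 2) • vecMulVec u u := by
  refine (exp_smul_eq_of_mul_self_mul_self hν
    (by rw [crossMatrix_mul_self_mul_self, hu]) t).trans ?_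
  rw [crossMatrix_mul_self, hu, smul_sub, smul_smul, div_mul_cancel₀ _ (pow_ne_zero 2 hν)]
  module

end

/-- Explicit expression of the geodesics of the `k ⊕ p` problem on `SO(3)`. -/
theorem so3_geodesic_formula (θ c t : ℝ) :
    NormedSpace.exp (t • (Real.cos θ • P1 + Real.sin θ • P2 + c • K))
        * NormedSpace.exp ((-(t * c)) • K) =
      let ν : ℝ := Real.sqrt (1 + c ^ 2)
      let K1 : ℝ := (1 + (1 + 2 * c ^ 2) * Real.cos (ν * t)) / (2 * (1 + c ^ 2))
      let K2 : ℝ := (1 - Real.cos (ν * t)) / (2 * (1 + c ^ 2))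
      let K3 : ℝ := Real.sin (ν * t) / ν
      let K4 : ℝ := c * (1 - Real.cos (ν * t)) / (1 + c ^ 2)
      !![K1 * Real.cos (c * t) + K2 * Real.cos (2 * θ + c * t) + K3 * c * Real.sin (c * t),
         K1 * Real.sin (c * t) + K2 * Real.sin (2 * θ + c * t) - K3 * c * Real.cos (c * t),
         K4 * Real.cos θ + K3 * Real.sin θ;
         -K1 * Real.sin (c * t) + K2 * Real.sin (2 * θ + c * t) + K3 * c * Real.cos (c * t),
         K1 * Real.cos (c * t) - K2 * Real.cos (2 * θ + c * t) + K3 * c * Real.sin (c * t),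
         -K3 * Real.cos θ + K4 * Real.sin θ;
         K4 * Real.cos (θ + c * t) - K3 * Real.sin (θ + c * t),
         K3 * Real.cos (θ + c * t) + K4 * Real.sin (θ + c * t),
         (Real.cos (ν * t) + c ^ 2) / (1 + c ^ 2)] := by
  extract_lets ν K1 K2 K3 K4
  have hν : ν ^ 2 = 1 + c ^ 2 := Real.sq_sqrt (by positivity)
  have hu : ![cos θ, sin θ, c] ⬝ᵥ ![cos θ, sin θ, c] = ν ^ 2 := by
    simp [dotProduct, Fin.sum_univ_three, hν, ← sq, cos_sq_add_sin_sq]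
  have he₃ : ![(0 : ℝ), 0, 1] ⬝ᵥ ![0, 0, 1] = 1 ^ 2 := by simp [dotProduct, Fin.sum_univ_three]
  have hb : (1 - cos (ν * t)) / ν ^ 2 = 2 * K2 := by
    rw [hν]; simp only [K2]; field_simp
  -- The factor `cos θ ^ 2 + sin θ ^ 2` makes each entrywise identity below a ring identity.
  have hK1 : K1 = cos (ν * t) + K2 * (cos θ ^ 2 + sin θ ^ 2) := by
    simp only [K1, K2]; rw [cos_sq_add_sin_sq]; field_simp; ring
  have hK4 : K4 = c * (2 * K2) := by
    simp only [K4, K2]; field_simp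
  have hM₃₃ : (cos (ν * t) + c ^ 2) / (1 + c ^ 2) = cos (ν * t) + 2 * K2 * c ^ 2 := by
    simp only [K2]; field_simp; ring
  rw [smul_P1_add_smul_P2_add_smul_K, K_eq_crossMatrix,
    exp_smul_crossMatrix (by positivity) hu, exp_smul_crossMatrix one_ne_zero he₃,
    hb, hK1, hK4, hM₃₃]
  ext i j
  fin_cases i <;> fin_cases j <;>
    simp [crossMatrix, Matrix.mul_apply, Fin.sum_univ_three, Matrix.one_apply, cos_add, sin_add,
      cos_two_mul', sin_two_mul, mul_comm t c, K3, sq, -cos_sq_add_sin_sq, -sin_sq_add_cos_sq] <;>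
    ring
end

section
/- For all θ, c ∈ ℝ, setting ν = √(1+c²) and t = 2π/ν, one has exp(t(cos θ·p1 + sin θ·p2 + c·k)) = −Id; consequently exp(t(cos θ·p1 + sin θ·p2 + c·k))·exp(−t·c·k) equals the diagonal matrix diag(e^{i(π−ct/2)}, e^{−i(π−ct/2)}), independently of θ. -/
open Matrix Complex

/-!
With `X = cos θ • p1 + sin θ • p2 + c • k` one has `X ^ 2 = -(ν² / 4) • 1`, so `B = t • X` satisfies
`B ^ 2 = -π² • 1`. Splitting the exponential series of such a `B` into even and odd terms gives
`exp B = cos π • 1 + (sin π / π) • B = -1`. The second claim follows because `k` is diagonal and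
`-e^{iw} = e^{i(π + w)}`.
-/

section

variable {𝔸 : Type*} [Ring 𝔸] [Algebra ℂ 𝔸] [TopologicalSpace 𝔸] [IsTopologicalRing 𝔸]
  [ContinuousSMul ℂ 𝔸] [T2Space 𝔸]

theorem NormedSpace.exp_eq_cos_add_sin_div_smul_of_sq_eq {a : ℂ} (ha : a ≠ 0) {B : 𝔸}
    (h : B ^ 2 = (-a ^ 2) • 1) :
    NormedSpace.exp B = Complex.cos a • 1 + (Complex.sin a / a) • B := by
  have even : ∀ n : ℕ, ((2 * n).factorial⁻¹ : ℂ) • B ^ (2 * n)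
      = ((-1) ^ n * a ^ (2 * n) / (2 * n).factorial) • (1 : 𝔸) := by
    intro n
    rw [pow_mul, h, smul_pow, one_pow, smul_smul, neg_pow, ← pow_mul]
    ring_nf
  have odd : ∀ n : ℕ, ((2 * n + 1).factorial⁻¹ : ℂ) • B ^ (2 * n + 1)
      = ((-1) ^ n * a ^ (2 * n + 1) / (2 * n + 1).factorial / a) • B := by
    intro n
    rw [pow_succ, pow_mul, h, smul_pow, one_pow, smul_mul_assoc, one_mul, smul_smul, neg_pow,
      ← pow_mul]
    congr 1
    field_simp
    ring
  rw [NormedSpace.exp_eq_tsum ℂ]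
  refine HasSum.tsum_eq (HasSum.even_add_odd ?_ ?_)
  · simpa only [even] using (Complex.hasSum_cos a).smul_const (1 : 𝔸)
  · simpa only [odd] using ((Complex.hasSum_sin a).div_const a).smul_const B

theorem NormedSpace.exp_eq_neg_one_of_sq_eq {B : 𝔸} (h : B ^ 2 = (-(Real.pi : ℂ) ^ 2) • 1) :
    NormedSpace.exp B = -1 := by
  rw [exp_eq_cos_add_sin_div_smul_of_sq_eq (by exact_mod_cast Real.pi_ne_zero) h,
    ← ofReal_cos, ← ofReal_sin, Real.cos_pi, Real.sin_pi]
  simp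

end

theorem sq_smul_p1_add_smul_p2_add_smul_k (x y z : ℂ) :
    (x • p1 + y • p2 + z • k) ^ 2 = (-(x ^ 2 + y ^ 2 + z ^ 2) / 4) • 1 := by
  ext i j
  fin_cases i <;> fin_cases j <;>
    simp [p1, p2, k, sq, Matrix.mul_apply, Fin.sum_univ_two] <;> ring_nf <;> simp [I_sq] <;> ring

theorem exp_smul_k (s : ℂ) :
    NormedSpace.exp (s • k) = diagonal ![Complex.exp (s * I / 2), Complex.exp (-(s * I / 2))] := by
  have : s • k = diagonal ![s * I / 2, -(s * I / 2)] := by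
    ext i j
    fin_cases i <;> fin_cases j <;> simp [k] <;> ring
  rw [this, Matrix.exp_diagonal, Complex.exp_eq_exp_ℂ]
  congr 1
  ext i
  fin_cases i <;> simp

/-- At time `t = 2π/√(1+c²)` the first factor of the geodesic equals `-Id`, so the
geodesic reaches the diagonal matrix `diag(e^{i(π - ct/2)}, e^{-i(π - ct/2)})`,
independently of `θ`. -/
theorem su2_geodesic_hits_ek (θ c : ℝ) :
    (NormedSpace.exp
        (((2 * Real.pi / Real.sqrt (1 + c ^ 2) : ℝ) : ℂ) •
          ((Real.cos θ : ℂ) • p1 + (Real.sin θ : ℂ) • p2 + (c : ℂ) • k)) = -1) ∧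
    (NormedSpace.exp
        (((2 * Real.pi / Real.sqrt (1 + c ^ 2) : ℝ) : ℂ) •
          ((Real.cos θ : ℂ) • p1 + (Real.sin θ : ℂ) • p2 + (c : ℂ) • k))
      * NormedSpace.exp ((-((2 * Real.pi / Real.sqrt (1 + c ^ 2) : ℝ) * c) : ℂ) • k)
      = diagonal ![Complex.exp (I * (Real.pi - c * (2 * Real.pi / Real.sqrt (1 + c ^ 2)) / 2)),
          Complex.exp (-(I * (Real.pi - c * (2 * Real.pi / Real.sqrt (1 + c ^ 2)) / 2)))]) := by
  set t : ℝ := 2 * Real.pi / Real.sqrt (1 + c ^ 2) with ht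
  have ht_sq : t ^ 2 * (1 + c ^ 2) = 4 * Real.pi ^ 2 := by
    rw [ht, div_pow, Real.sq_sqrt (by positivity)]
    field_simp
    norm_num
  have hexp : NormedSpace.exp
      ((t : ℂ) • ((Real.cos θ : ℂ) • p1 + (Real.sin θ : ℂ) • p2 + (c : ℂ) • k)) = -1 := by
    apply NormedSpace.exp_eq_neg_one_of_sq_eq
    have htrig : (Real.cos θ : ℂ) ^ 2 + (Real.sin θ : ℂ) ^ 2 = 1 := by
      exact_mod_cast Real.cos_sq_add_sin_sq θ
    have ht_sq' : (t : ℂ) ^ 2 * (1 + c ^ 2) = 4 * Real.pi ^ 2 := by exact_mod_cast ht_sq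
    rw [smul_pow, sq_smul_p1_add_smul_p2_add_smul_k, smul_smul]
    congr 1
    linear_combination (-1 / 4 : ℂ) * ht_sq' - (t : ℂ) ^ 2 / 4 * htrig
  refine ⟨hexp, ?_⟩
  have hct : (c : ℂ) * (2 * Real.pi / Real.sqrt (1 + c ^ 2) : ℂ) = t * c := by
    rw [ht]
    push_cast
    ring
  rw [hexp, neg_one_mul, exp_smul_k, diagonal_neg, hct]
  congr 1
  ext i
  fin_cases i
  · simp only [Fin.zero_eta, Fin.isValue, cons_val_zero]
    rw [← exp_add_pi_mul_I]
    congr 1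
    ring
  · simp only [Fin.mk_one, Fin.isValue, cons_val_one, cons_val_zero]
    rw [← exp_sub_pi_mul_I]
    congr 1
    ring
end

section
/- Cylindrical symmetry: let E(θ,c,t) = exp(t(cos θ·p1 + sin θ·p2 + c·k))·exp(−t·c·k), and write E(0,c,t) = [[α, β], [−conj(β), conj(α)]]. Then for every θ ∈ ℝ, E(θ,c,t) = [[α, e^{iθ}β], [−e^{−iθ}conj(β), conj(α)]]. -/
/-!
The diagonal unitary `diag(e^{iθ/2}, e^{-iθ/2}) = exp (θ • k)` commutes with `k` and conjugates
`p1` into `cos θ • p1 + sin θ • p2`. Since the matrix exponential commutes with conjugation,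
`E θ c t` is the conjugate of `E 0 c t` by this matrix, and conjugating a `2 × 2` matrix by
`diag(u, u⁻¹)` multiplies its off-diagonal entries by `u²` and `u⁻²`.
-/

open Matrix Complex

/-- The sub-Riemannian exponential map on `SU(2)`. -/
noncomputable def E (θ c t : ℝ) : Matrix (Fin 2) (Fin 2) ℂ :=
  NormedSpace.exp ((t : ℂ) • ((Real.cos θ : ℂ) • p1 + (Real.sin θ : ℂ) • p2 + (c : ℂ) • k))
    * NormedSpace.exp ((-(t * c) : ℂ) • k)

section DiagonalConj

variable {R : Type*} [CommRing R]

def diagUnitFinTwo (u : Rˣ) : (Matrix (Fin 2) (Fin 2) R)ˣ where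
  val := diagonal ![(u : R), ↑u⁻¹]
  inv := diagonal ![(↑u⁻¹ : R), u]
  val_inv := by ext i j; fin_cases i <;> fin_cases j <;> simp
  inv_val := by ext i j; fin_cases i <;> fin_cases j <;> simp

theorem diagUnitFinTwo_mul_mul_inv (u : Rˣ) (x y z w : R) :
    (diagUnitFinTwo u : Matrix (Fin 2) (Fin 2) R) * !![x, y; z, w] *
        (↑(diagUnitFinTwo u)⁻¹ : Matrix (Fin 2) (Fin 2) R)
      = !![x, (u : R) ^ 2 * y; (↑u⁻¹ : R) ^ 2 * z, w] := by
  ext i j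
  fin_cases i <;> fin_cases j <;>
    simp [diagUnitFinTwo, mul_right_comm _ x, mul_right_comm _ w] <;> ring

end DiagonalConj

noncomputable def halfPhase (θ : ℝ) : ℂˣ := Units.mk0 (exp (I * θ / 2)) (exp_ne_zero _)

theorem halfPhase_sq (θ : ℝ) : (halfPhase θ : ℂ) ^ 2 = exp (I * θ) := by
  rw [halfPhase, Units.val_mk0, ← exp_nat_mul]; ring_nf

theorem halfPhase_inv_sq (θ : ℝ) : (↑(halfPhase θ)⁻¹ : ℂ) ^ 2 = exp (-(I * θ)) := by
  rw [Units.val_inv_eq_inv_val, inv_pow, halfPhase_sq, exp_neg]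

noncomputable def kRotation (θ : ℝ) : (Matrix (Fin 2) (Fin 2) ℂ)ˣ := diagUnitFinTwo (halfPhase θ)

theorem kRotation_conj_p1 (θ : ℝ) :
    (kRotation θ : Matrix (Fin 2) (Fin 2) ℂ) * p1 * (↑(kRotation θ)⁻¹ : Matrix (Fin 2) (Fin 2) ℂ)
      = (Real.cos θ : ℂ) • p1 + (Real.sin θ : ℂ) • p2 := by
  have hp1 : p1 = !![0, 1 / 2; -1 / 2, 0] := by
    ext i j; fin_cases i <;> fin_cases j <;> simp [p1]; ring
  rw [hp1, kRotation, diagUnitFinTwo_mul_mul_inv, halfPhase_sq, halfPhase_inv_sq, mul_comm I,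
    ← neg_mul, exp_mul_I, exp_mul_I, cos_neg, sin_neg]
  ext i j; fin_cases i <;> fin_cases j <;> simp [p2] <;> ring

theorem kRotation_conj_k (θ : ℝ) :
    (kRotation θ : Matrix (Fin 2) (Fin 2) ℂ) * k * (↑(kRotation θ)⁻¹ : Matrix (Fin 2) (Fin 2) ℂ)
      = k := by
  have hk : k = !![I / 2, 0; 0, -I / 2] := by
    ext i j; fin_cases i <;> fin_cases j <;> simp [k] <;> ring
  rw [hk, kRotation, diagUnitFinTwo_mul_mul_inv]
  simp

theorem E_eq_kRotation_conj (θ c t : ℝ) :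
    E θ c t = (kRotation θ : Matrix (Fin 2) (Fin 2) ℂ) * E 0 c t *
      (↑(kRotation θ)⁻¹ : Matrix (Fin 2) (Fin 2) ℂ) := by
  set U := kRotation θ
  have hgen : (t : ℂ) • ((Real.cos θ : ℂ) • p1 + (Real.sin θ : ℂ) • p2 + (c : ℂ) • k)
      = (U : Matrix (Fin 2) (Fin 2) ℂ) *
        ((t : ℂ) • ((Real.cos 0 : ℂ) • p1 + (Real.sin 0 : ℂ) • p2 + (c : ℂ) • k)) *
        (↑U⁻¹ : Matrix (Fin 2) (Fin 2) ℂ) := by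
    simp only [Real.cos_zero, Real.sin_zero, ofReal_one, ofReal_zero, one_smul, zero_smul,
      add_zero, mul_add, add_mul, mul_smul_comm, smul_mul_assoc, U, kRotation_conj_p1,
      kRotation_conj_k]
  have hk : (-(t * c) : ℂ) • k = (U : Matrix (Fin 2) (Fin 2) ℂ) * ((-(t * c) : ℂ) • k) *
      (↑U⁻¹ : Matrix (Fin 2) (Fin 2) ℂ) := by
    rw [mul_smul_comm, smul_mul_assoc, kRotation_conj_k]
  rw [E, hgen, hk, Matrix.exp_units_conj, Matrix.exp_units_conj, E]
  simp only [mul_assoc, Units.inv_mul_cancel_left]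

/-- Cylindrical symmetry of the geodesics of `SU(2)`. -/
theorem su2_cylindrical_symmetry (c t : ℝ) (α β : ℂ)
    (hE : E 0 c t = !![α, β; -(starRingEnd ℂ) β, (starRingEnd ℂ) α]) (θ : ℝ) :
    E θ c t = !![α, Complex.exp (I * θ) * β;
      -(Complex.exp (-(I * θ)) * (starRingEnd ℂ) β), (starRingEnd ℂ) α] := by
  rw [E_eq_kRotation_conj, hE, kRotation, diagUnitFinTwo_mul_mul_inv, halfPhase_sq,
    halfPhase_inv_sq, mul_neg]
end

section
/- Central symmetry: let E(θ,c,t) = exp(t(cos θ·p1 + sin θ·p2 + c·k))·exp(−t·c·k), and write E(θ,c,t) = [[α, β], [−conj(β), conj(α)]]. Then E(θ,−c,t) = [[conj(α), e^{2iθ}conj(β)], [−e^{−2iθ}β, α]]. -/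
open Matrix Complex

/-!
Let `U = diag(e^{iθ}, e^{-iθ})` and `φ(M) = U M̄ U⁻¹`. Complex conjugation fixes `p1` and
negates `p2` and `k`, and conjugation by `U` multiplies the off-diagonal entries by `e^{±2iθ}`,
which turns `cos θ p1 - sin θ p2` back into `cos θ p1 + sin θ p2`. So `φ` maps the generator
`cos θ p1 + sin θ p2 + c k` to the one with `-c`, and `k` to `-k`. Being a ring endomorphism
that is linear over `ℝ` and commutes with `exp`, `φ` therefore maps `E θ c t` to `E θ (-c) t`;
on a matrix `[[α, β], [-β̄, ᾱ]]` it gives exactly the claimed one.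
-/

open scoped ComplexConjugate

theorem exp_map_conj {m : Type*} [Fintype m] [DecidableEq m] (A : Matrix m m ℂ) :
    NormedSpace.exp (A.map conj) = (NormedSpace.exp A).map conj := by
  have h : ∀ B : Matrix m m ℂ, B.map conj = Bᴴᵀ := fun _ => rfl
  rw [h, h, exp_transpose, exp_conjTranspose]

noncomputable def phaseUnit (θ : ℝ) : (Matrix (Fin 2) (Fin 2) ℂ)ˣ where
  val := !![exp (I * θ), 0; 0, exp (-(I * θ))]
  inv := !![exp (-(I * θ)), 0; 0, exp (I * θ)]
  val_inv := by simp [← Complex.exp_add, one_fin_two]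
  inv_val := by simp [← Complex.exp_add, one_fin_two]

noncomputable def phaseConj (θ : ℝ) : Matrix (Fin 2) (Fin 2) ℂ →+* Matrix (Fin 2) (Fin 2) ℂ :=
  (MulSemiringAction.toRingHom _ _ (ConjAct.toConjAct (phaseUnit θ))).comp
    (starRingEnd ℂ).mapMatrix

theorem phaseConj_apply (θ : ℝ) (M : Matrix (Fin 2) (Fin 2) ℂ) :
    phaseConj θ M = phaseUnit θ * M.map conj * (↑(phaseUnit θ)⁻¹ : Matrix (Fin 2) (Fin 2) ℂ) :=
  ConjAct.units_smul_def _ _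

theorem phaseConj_of (θ : ℝ) (a b c d : ℂ) :
    phaseConj θ !![a, b; c, d] =
      !![conj a, exp (2 * I * θ) * conj b; exp (-(2 * I * θ)) * conj c, conj d] := by
  have h : exp (2 * I * θ) = exp (I * θ) * exp (I * θ) := by rw [← Complex.exp_add]; ring_nf
  rw [phaseConj_apply, eta_fin_two (Matrix.map _ _)]
  simp [phaseUnit, exp_neg, h]
  split_ands <;> field_simp

theorem phaseConj_smul (θ : ℝ) (z : ℂ) (M : Matrix (Fin 2) (Fin 2) ℂ) :
    phaseConj θ (z • M) = conj z • phaseConj θ M := by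
  simp [phaseConj_apply, map_smul']

theorem phaseConj_exp (θ : ℝ) (A : Matrix (Fin 2) (Fin 2) ℂ) :
    phaseConj θ (NormedSpace.exp A) = NormedSpace.exp (phaseConj θ A) := by
  rw [phaseConj_apply, phaseConj_apply, ← exp_map_conj, exp_units_conj]

theorem generator_eq (θ c : ℝ) :
    (Real.cos θ : ℂ) • p1 + (Real.sin θ : ℂ) • p2 + (c : ℂ) • k =
      !![c * I / 2, exp (I * θ) / 2; -exp (-(I * θ)) / 2, -(c * I / 2)] := by
  have h : exp (I * θ) = Real.cos θ + Real.sin θ * I := by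
    rw [mul_comm, exp_mul_I, ← ofReal_cos, ← ofReal_sin]
  have h' : exp (-(I * θ)) = Real.cos θ - Real.sin θ * I := by
    rw [← mul_neg, mul_comm, exp_mul_I, cos_neg, sin_neg, ← ofReal_cos, ← ofReal_sin]; ring
  rw [h, h']
  ext i j; fin_cases i <;> fin_cases j <;> simp [p1, p2, k] <;> ring

theorem k_eq : k = !![I / 2, 0; 0, -(I / 2)] := by
  ext i j; fin_cases i <;> fin_cases j <;> simp [k] <;> ring

theorem phaseConj_generator (θ c : ℝ) :
    phaseConj θ ((Real.cos θ : ℂ) • p1 + (Real.sin θ : ℂ) • p2 + (c : ℂ) • k) =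
      (Real.cos θ : ℂ) • p1 + (Real.sin θ : ℂ) • p2 + ((-c : ℝ) : ℂ) • k := by
  have h : exp (2 * I * θ) * exp (-(I * θ)) = exp (I * θ) := by rw [← exp_add]; ring_nf
  have h' : exp (-(2 * I * θ)) * exp (I * θ) = exp (-(I * θ)) := by rw [← exp_add]; ring_nf
  rw [generator_eq, generator_eq, phaseConj_of]
  simp [← exp_conj, map_ofNat, mul_div_assoc', h, h']

theorem phaseConj_k (θ : ℝ) : phaseConj θ k = -k := by
  rw [k_eq, phaseConj_of]
  simp [map_ofNat, neg_div]

theorem E_neg_eq_phaseConj (θ c t : ℝ) : E θ (-c) t = phaseConj θ (E θ c t) := by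
  rw [E, E, map_mul, phaseConj_exp, phaseConj_exp, phaseConj_smul, phaseConj_smul,
    phaseConj_generator, phaseConj_k]
  simp

/-- Central symmetry of the geodesics of `SU(2)`. -/
theorem su2_central_symmetry (θ c t : ℝ) (α β : ℂ)
    (hE : E θ c t = !![α, β; -(starRingEnd ℂ) β, (starRingEnd ℂ) α]) :
    E θ (-c) t = !![(starRingEnd ℂ) α, Complex.exp (2 * I * θ) * (starRingEnd ℂ) β;
      -(Complex.exp (-(2 * I * θ)) * β), α] := by
  rw [E_neg_eq_phaseConj, hE, phaseConj_of]
  simp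
end

section
/- Let p ≥ 2 and q be integers and let ω ∈ ℂ satisfy ω^p = 1. Suppose (α, β) ∈ ℂ² satisfies |α|² + |β|² = 1, Re(α) > 0 and Im(α)²/sin²(π/p) + |β|² < 1, and suppose that the pair (ωα, ω^q β) satisfies the same three conditions. Then ω = 1. -/
/-!
With `‖α‖² + ‖β‖² = 1`, the conditions `Re z > 0` and `Im(z)² / sin²(π/p) + ‖β‖² < 1` say that
`z` lies in the open sector `|arg z| < π/p` of radius `‖α‖`. If both `α` and `ωα` lie in it,
then `Re ω · ‖α‖² = Re (conj α · ωα) > (cos²(π/p) - sin²(π/p)) ‖α‖²`, i.e. `Re ω > cos(2π/p)`,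
so `|arg ω| < 2π/p`. Since `p · arg ω ∈ 2πℤ`, this forces `arg ω = 0`, i.e. `ω = 1`.
-/

open Complex Real

theorem abs_cos_mul_norm_lt_re {z : ℂ} {θ : ℝ} (hre : 0 < z.re)
    (him : z.im ^ 2 < Real.sin θ ^ 2 * ‖z‖ ^ 2) : |Real.cos θ| * ‖z‖ < z.re := by
  have hz : ‖z‖ ^ 2 = z.re ^ 2 + z.im ^ 2 := by rw [Complex.sq_norm, normSq_apply]; ring
  have : (|Real.cos θ| * ‖z‖) ^ 2 < z.re ^ 2 := by
    nlinarith [Real.sin_sq_add_cos_sq θ, sq_abs (Real.cos θ)]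
  exact lt_of_pow_lt_pow_left₀ 2 hre.le this

theorem cos_two_mul_lt_re_of_sq_im_lt {u ω : ℂ} {θ : ℝ} (hω : ‖ω‖ = 1)
    (hre : 0 < u.re) (him : u.im ^ 2 < Real.sin θ ^ 2 * ‖u‖ ^ 2)
    (hre' : 0 < (ω * u).re) (him' : (ω * u).im ^ 2 < Real.sin θ ^ 2 * ‖u‖ ^ 2) :
    Real.cos (2 * θ) < ω.re := by
  have hnorm : ‖ω * u‖ = ‖u‖ := by rw [norm_mul, hω, one_mul]
  have ha := abs_cos_mul_norm_lt_re hre him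
  have ha' := abs_cos_mul_norm_lt_re hre' (hnorm ▸ him')
  rw [hnorm] at ha'
  have hu : 0 < ‖u‖ := norm_pos_iff.mpr fun h ↦ by simp [h] at hre
  -- the real part of `conj u * (ω * u) = ω * ‖u‖ ^ 2`
  have hinner : ω.re * ‖u‖ ^ 2 = u.re * (ω * u).re + u.im * (ω * u).im := by
    rw [Complex.sq_norm, normSq_apply, mul_re, mul_im]; ring
  have hbb : -(Real.sin θ ^ 2 * ‖u‖ ^ 2) < u.im * (ω * u).im := by
    nlinarith [sq_nonneg (u.im + (ω * u).im), sq_nonneg (u.im - (ω * u).im)]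
  have : Real.cos (2 * θ) * ‖u‖ ^ 2 < ω.re * ‖u‖ ^ 2 := by
    rw [Real.cos_two_mul]
    nlinarith [mul_lt_mul'' ha ha' (by positivity) (by positivity), Real.sin_sq_add_cos_sq θ,
      sq_abs (Real.cos θ)]
  exact lt_of_mul_lt_mul_right this (by positivity)

theorem abs_arg_lt_of_cos_lt_re {ω : ℂ} (hω : ‖ω‖ = 1) {x : ℝ} (hx : 0 ≤ x)
    (h : Real.cos x < ω.re) : |arg ω| < x := by
  have hω0 : ω ≠ 0 := norm_ne_zero_iff.mp (by simp [hω])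
  by_contra! hle
  have := cos_le_cos_of_nonneg_of_le_pi hx (abs_arg_le_pi ω) hle
  rw [cos_abs, cos_arg hω0, hω, div_one] at this
  linarith

theorem eq_one_of_pow_eq_one_of_abs_arg_lt {ω : ℂ} {p : ℕ} (hp : p ≠ 0) (hω : ω ^ p = 1)
    (harg : |arg ω| < 2 * π / p) : ω = 1 := by
  have hnorm : ‖ω‖ = 1 := norm_eq_one_of_pow_eq_one hω hp
  have hpos : (0 : ℝ) < p := by positivity
  have hexp : cexp (p * (arg ω * I)) = 1 := by
    rw [Complex.exp_nat_mul, ← hω]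
    congr 1
    simpa [hnorm] using norm_mul_exp_arg_mul_I ω
  obtain ⟨n, hn⟩ := exp_eq_one_iff.mp hexp
  have hpn : (p : ℝ) * arg ω = n * (2 * π) := by simpa using congrArg im hn
  have hn0 : n = 0 := by
    have : |(n : ℝ)| * (2 * π) < 1 * (2 * π) := by
      calc |(n : ℝ)| * (2 * π) = p * |arg ω| := by
            rw [← abs_of_pos two_pi_pos, ← abs_mul, ← hpn, abs_mul, abs_of_pos hpos]
        _ < p * (2 * π / p) := by gcongr
        _ = 1 * (2 * π) := by field_simp
    have : |(n : ℝ)| < 1 := lt_of_mul_lt_mul_right this (by positivity)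
    exact Int.abs_lt_one_iff.mp (by exact_mod_cast this)
  have harg0 : arg ω = 0 := by
    simpa [hn0, hpos.ne'] using hpn
  exact ext_norm_arg (by simp [hnorm]) (by simp [harg0])

theorem lens_space_fundamental_domain_unique_rep_general (p : ℕ) (hp : 2 ≤ p) (q : ℤ) (ω : ℂ)
    (hω : ω ^ p = 1) (α β : ℂ)
    (h1 : ‖α‖ ^ 2 + ‖β‖ ^ 2 = 1)
    (h2 : 0 < α.re)
    (h3 : α.im ^ 2 / Real.sin (Real.pi / p) ^ 2 + ‖β‖ ^ 2 < 1)
    (h2' : 0 < (ω * α).re)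
    (h3' : (ω * α).im ^ 2 / Real.sin (Real.pi / p) ^ 2 + ‖ω ^ q * β‖ ^ 2 < 1) :
    ω = 1 := by
  have hp₀ : p ≠ 0 := by omega
  have hωn : ‖ω‖ = 1 := norm_eq_one_of_pow_eq_one hω hp₀
  have hs : Real.sin (π / p) ≠ 0 :=
    (sin_pos_of_pos_of_lt_pi (by positivity) (div_lt_self pi_pos (by exact_mod_cast hp))).ne'
  have hβ : ‖ω ^ q * β‖ = ‖β‖ := by rw [norm_mul, norm_zpow, hωn, one_zpow, one_mul]
  have sq_im_lt : ∀ z : ℂ, z.im ^ 2 / Real.sin (π / p) ^ 2 + ‖β‖ ^ 2 < 1 →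
      z.im ^ 2 < Real.sin (π / p) ^ 2 * ‖α‖ ^ 2 := by
    intro z hz
    rw [div_add' _ _ _ (pow_ne_zero 2 hs), div_lt_one (by positivity)] at hz
    nlinarith
  have hre : Real.cos (2 * (π / p)) < ω.re :=
    cos_two_mul_lt_re_of_sq_im_lt hωn h2 (sq_im_lt α h3) h2' (sq_im_lt _ (hβ ▸ h3'))
  rw [← mul_div_assoc] at hre
  exact eq_one_of_pow_eq_one_of_abs_arg_lt hp₀ hω (abs_arg_lt_of_cos_lt_re hωn (by positivity) hre)

/-- The fundamental domain `E_p` of the lens space `L(p,q)` inside `SU(2)` contains at most one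
representative of each equivalence class: if both `(α, β)` and `(ωα, ω^q β)` lie in `E_p`,
where `ω` is a `p`-th root of unity, then `ω = 1`. -/
theorem lens_space_fundamental_domain_unique_rep (p : ℕ) (hp : 2 ≤ p) (q : ℤ) (ω : ℂ)
    (hω : ω ^ p = 1) (α β : ℂ)
    (h1 : ‖α‖ ^ 2 + ‖β‖ ^ 2 = 1)
    (h2 : 0 < α.re)
    (h3 : α.im ^ 2 / Real.sin (Real.pi / p) ^ 2 + ‖β‖ ^ 2 < 1)
    (h1' : ‖ω * α‖ ^ 2 + ‖ω ^ q * β‖ ^ 2 = 1)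
    (h2' : 0 < (ω * α).re)
    (h3' : (ω * α).im ^ 2 / Real.sin (Real.pi / p) ^ 2 + ‖ω ^ q * β‖ ^ 2 < 1) :
    ω = 1 :=
  lens_space_fundamental_domain_unique_rep_general p hp q ω hω α β h1 h2 h3 h2' h3'
end

section
/- Let c, d ∈ ℝ and let T satisfy 0 < T < 2π/√(1+c²) and 0 < T < 2π/√(1+d²). If sin(√(1+c²)·T/2)/√(1+c²) = sin(√(1+d²)·T/2)/√(1+d²), then c² = d². -/
/-!
Put `ω = √(1 + c²)`. Since `sin (ω T / 2) / ω = (T / 2) · sinc (ω T / 2)`, the hypothesis says that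
`sinc` takes the same value at `√(1 + c²) T / 2` and `√(1 + d²) T / 2`. The bounds on `T` place
both points in `(0, π)`, where `sinc` is strictly decreasing because `x cos x < sin x` there.
Hence `√(1 + c²) = √(1 + d²)`, i.e. `c² = d²`.
-/

open Real Set

namespace Real

lemma mul_cos_lt_sin {x : ℝ} (hx₀ : 0 < x) (hxπ : x < π) : x * cos x < sin x := by
  rcases lt_or_ge x (π / 2) with hx | hx
  · have hcos : 0 < cos x := cos_pos_of_mem_Ioo ⟨by linarith [pi_pos], hx⟩
    have htan := lt_tan hx₀ hx
    rwa [tan_eq_sin_div_cos, lt_div_iff₀ hcos] at htan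
  · have hcos : cos x ≤ 0 := cos_nonpos_of_pi_div_two_le_of_le hx (by linarith [pi_pos])
    have hsin : 0 < sin x := sin_pos_of_pos_of_lt_pi hx₀ hxπ
    nlinarith

lemma hasDerivAt_sinc_of_ne_zero {x : ℝ} (hx : x ≠ 0) :
    HasDerivAt sinc ((x * cos x - sin x) / x ^ 2) x := by
  have hquot := (hasDerivAt_sin x).div (hasDerivAt_id' x) hx
  rw [mul_one, mul_comm] at hquot
  refine hquot.congr_of_eventuallyEq ?_
  filter_upwards [isOpen_ne.mem_nhds hx] with y hy using sinc_of_ne_zero hy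

lemma strictAntiOn_sinc : StrictAntiOn sinc (Icc 0 π) := by
  refine strictAntiOn_of_deriv_neg (convex_Icc 0 π) continuous_sinc.continuousOn ?_
  rw [interior_Icc]
  rintro x ⟨hx₀, hxπ⟩
  rw [(hasDerivAt_sinc_of_ne_zero hx₀.ne').deriv]
  exact div_neg_of_neg_of_pos (by linarith [mul_cos_lt_sin hx₀ hxπ]) (by positivity)

lemma sin_mul_div_eq_mul_sinc {a : ℝ} (ha : a ≠ 0) (t : ℝ) :
    sin (a * t) / a = t * sinc (a * t) := by
  rcases eq_or_ne t 0 with rfl | ht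
  · simp
  · rw [sinc_of_ne_zero (mul_ne_zero ha ht)]
    field_simp

end Real

lemma half_mul_mem_Icc_of_lt_two_pi_div {ω T : ℝ} (hω : 0 < ω) (hT₀ : 0 ≤ T)
    (hT : T < 2 * π / ω) : ω * (T / 2) ∈ Icc 0 π := by
  rw [lt_div_iff₀ hω] at hT
  constructor <;> nlinarith

/-- If two geodesics of `SU(2)` with parameters `c` and `d` reach at a common time `T`
(before the respective cut times) points with the same value of `|β|`, then `c² = d²`. -/
theorem su2_same_beta_norm_imp_c_sq_eq (c d T : ℝ)
    (hT0 : 0 < T)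
    (hTc : T < 2 * Real.pi / Real.sqrt (1 + c ^ 2))
    (hTd : T < 2 * Real.pi / Real.sqrt (1 + d ^ 2))
    (h : Real.sin (Real.sqrt (1 + c ^ 2) * T / 2) / Real.sqrt (1 + c ^ 2)
        = Real.sin (Real.sqrt (1 + d ^ 2) * T / 2) / Real.sqrt (1 + d ^ 2)) :
    c ^ 2 = d ^ 2 := by
  have hc : 0 < √(1 + c ^ 2) := sqrt_pos.2 (by positivity)
  have hd : 0 < √(1 + d ^ 2) := sqrt_pos.2 (by positivity)
  simp only [mul_div_assoc, sin_mul_div_eq_mul_sinc hc.ne', sin_mul_div_eq_mul_sinc hd.ne'] at h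
  have hsinc : sinc (√(1 + c ^ 2) * (T / 2)) = sinc (√(1 + d ^ 2) * (T / 2)) :=
    mul_left_cancel₀ (by positivity) h
  have hmul := strictAntiOn_sinc.injOn (half_mul_mem_Icc_of_lt_two_pi_div hc hT0.le hTc)
    (half_mul_mem_Icc_of_lt_two_pi_div hd hT0.le hTd) hsinc
  have hsqrt : √(1 + c ^ 2) = √(1 + d ^ 2) := mul_right_cancel₀ (by positivity) hmul
  rw [sqrt_inj (by positivity) (by positivity)] at hsqrt
  linarith
end

section
/- Let c > 0 and t > 0 satisfy √(1+c²)·t/2 < π. Then c·cos(ct/2)·sin(√(1+c²)·t/2) ≠ √(1+c²)·sin(ct/2)·cos(√(1+c²)·t/2). -/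
/-!
With `a = ct/2` and `b = √(1+c²)t/2` we have `0 < a < b < π`, and after multiplying by `t/2` the
claim becomes `b sin a cos b ≠ a cos a sin b`, i.e. `x ↦ x cot x` takes different values at `a`
and `b`. The strict inequality follows from the decrease of `sin x / x` (strict concavity of
`sin` on `[0, π]`) applied at `b - a < b + a`: expanding `sin (b ± a)` turns
`(b - a) sin (b + a) < (b + a) sin (b - a)` into `b sin a cos b < a cos a sin b`.
-/

open Real Set

lemma strictAntiOn_sin_div : StrictAntiOn (fun x => sin x / x) (Ioc 0 π) := by
  intro x hx y hy hxy
  have h0 : (0 : ℝ) ∈ Icc 0 π := ⟨le_rfl, pi_pos.le⟩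
  simpa using strictConcaveOn_sin_Icc.secant_strict_mono h0 (Ioc_subset_Icc_self hx)
    (Ioc_subset_Icc_self hy) hx.1.ne' hy.1.ne' hxy

lemma mul_sin_lt_mul_sin {x y : ℝ} (hx : 0 < x) (hxy : x < y) (hxπ : x < π) (hy : y ≤ 2 * π) :
    x * sin y < y * sin x := by
  rcases le_or_gt y π with hyπ | hπy
  · have h := strictAntiOn_sin_div ⟨hx, hxπ.le⟩ ⟨hx.trans hxy, hyπ⟩ hxy
    rw [div_lt_div_iff₀ (hx.trans hxy) hx] at h
    linarith
  · have hsiny : sin y ≤ 0 := by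
      rw [← sin_sub_two_pi]
      exact sin_nonpos_of_nonpos_of_neg_pi_le (by linarith) (by linarith)
    have hsinx : 0 < sin x := sin_pos_of_pos_of_lt_pi hx hxπ
    nlinarith

lemma mul_sin_mul_cos_lt_mul_cos_mul_sin {a b : ℝ} (ha : 0 < a) (hab : a < b) (hb : b < π) :
    b * sin a * cos b < a * cos a * sin b := by
  have h := mul_sin_lt_mul_sin (x := b - a) (y := b + a) (by linarith) (by linarith)
    (by linarith) (by linarith)
  rw [sin_add, sin_sub] at h
  linarith

/-- For `c > 0` and `0 < t` with `√(1+c²)·t/2 < π`, one has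
`c·cos(ct/2)·sin(√(1+c²)t/2) ≠ √(1+c²)·sin(ct/2)·cos(√(1+c²)t/2)`. -/
theorem su2_no_cut_outside_ek (c t : ℝ) (hc : 0 < c) (ht : 0 < t)
    (hlim : Real.sqrt (1 + c ^ 2) * t / 2 < Real.pi) :
    c * Real.cos (c * t / 2) * Real.sin (Real.sqrt (1 + c ^ 2) * t / 2)
      ≠ Real.sqrt (1 + c ^ 2) * Real.sin (c * t / 2)
          * Real.cos (Real.sqrt (1 + c ^ 2) * t / 2) := by
  set s := Real.sqrt (1 + c ^ 2)
  have hcs : c < s := lt_sqrt_of_sq_lt (by linarith)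
  have h := mul_sin_mul_cos_lt_mul_cos_mul_sin (a := c * t / 2) (b := s * t / 2)
    (by positivity) (by gcongr) hlim
  intro heq
  have h' : t / 2 * (s * sin (c * t / 2) * cos (s * t / 2))
      < t / 2 * (c * cos (c * t / 2) * sin (s * t / 2)) := by linarith
  rw [heq] at h'
  exact h'.false
end

section
/- Let c ∈ (0,1) and set λ = √(1−c²). Consider the equation λ·cosh(λt/2)·sin(ct/2) = c·sinh(λt/2)·cos(ct/2) in the unknown t > 0. Then: (i) there is no solution t > 0 with ct/2 ∈ (0, π]; (ii) there exists a solution t > 0 with ct/2 ∈ (π, 3π/2). -/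
/-!
Write `u = ct/2`, so that `λt/2 = k u` with `k = λ/c`. On `(0, π]` the strict inequalities
`u cos u < sin u` and `sinh y < y cosh y` (both from derivatives `u sin u` and `y sinh y`)
combine to `sinh (k u) cos u < k cosh (k u) sin u`, so the equation has no root there.
At `u = π` the difference `λ cosh (k u) sin u - c sinh (k u) cos u` equals `c sinh (kπ) > 0`
and at `u = 3π/2` it equals `-λ cosh (3kπ/2) < 0`, so it vanishes in between.
-/

open Real Set

theorem Real.sinh_lt_mul_cosh {y : ℝ} (hy : 0 < y) : sinh y < y * cosh y := by
  have hmono : StrictMonoOn (fun x : ℝ => x * cosh x - sinh x) (Ici 0) := by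
    refine strictMonoOn_of_deriv_pos (convex_Ici 0) (by fun_prop) fun x hx => ?_
    rw [interior_Ici, mem_Ioi] at hx
    have hderiv : deriv (fun x : ℝ => x * cosh x - sinh x) x = x * sinh x := by simp
    rw [hderiv]
    positivity
  simpa using hmono self_mem_Ici hy.le hy

theorem Real.mul_cos_lt_sin_s18 {u : ℝ} (hu0 : 0 < u) (huπ : u ≤ π) : u * cos u < sin u := by
  have hmono : StrictMonoOn (fun x : ℝ => sin x - x * cos x) (Icc 0 π) := by
    refine strictMonoOn_of_deriv_pos (convex_Icc 0 π) (by fun_prop) fun x hx => ?_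
    rw [interior_Icc] at hx
    have hderiv : deriv (fun x : ℝ => sin x - x * cos x) x = x * sin x := by simp
    rw [hderiv]
    exact mul_pos hx.1 (sin_pos_of_pos_of_lt_pi hx.1 hx.2)
  simpa using hmono (left_mem_Icc.2 pi_pos.le) ⟨hu0.le, huπ⟩ hu0

theorem Real.sinh_mul_cos_lt_mul_cosh_mul_sin {k u : ℝ} (hk : 0 < k) (hu0 : 0 < u)
    (huπ : u ≤ π) :
    sinh (k * u) * cos u < k * cosh (k * u) * sin u := by
  have hy : 0 < k * u := mul_pos hk hu0
  have hsin : 0 ≤ sin u := sin_nonneg_of_nonneg_of_le_pi hu0.le huπ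
  refine lt_of_mul_lt_mul_left ?_ hu0.le
  calc u * (sinh (k * u) * cos u) = u * cos u * sinh (k * u) := by ring
    _ < sin u * sinh (k * u) :=
      mul_lt_mul_of_pos_right (mul_cos_lt_sin_s18 hu0 huπ) (sinh_pos_iff.2 hy)
    _ ≤ sin u * (k * u * cosh (k * u)) := mul_le_mul_of_nonneg_left (sinh_lt_mul_cosh hy).le hsin
    _ = u * (k * cosh (k * u) * sin u) := by ring

theorem Real.exists_mem_Ioo_cosh_mul_sin_eq_sinh_mul_cos {a b k : ℝ} (ha : 0 < a) (hb : 0 < b)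
    (hk : 0 < k) :
    ∃ u ∈ Ioo π (3 * π / 2), a * cosh (k * u) * sin u = b * sinh (k * u) * cos u := by
  let f : ℝ → ℝ := fun u => a * cosh (k * u) * sin u - b * sinh (k * u) * cos u
  have hf_pi : 0 < f π := by
    simpa [f] using mul_pos hb (sinh_pos_iff.2 (mul_pos hk pi_pos))
  have hf_three_halves : f (3 * π / 2) < 0 := by
    have h : 3 * π / 2 = π / 2 + π := by ring
    simpa [f, h] using mul_pos ha (cosh_pos (k * (π / 2 + π)))
  obtain ⟨u, hu, hfu⟩ := intermediate_value_Ioo' (by linarith [pi_pos])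
    (by fun_prop : Continuous f).continuousOn ⟨hf_three_halves, hf_pi⟩
  exact ⟨u, hu, sub_eq_zero.1 hfu⟩

/-- For `c ∈ (0,1)` and `λ = √(1-c²)`, the equation
`λ·cosh(λt/2)·sin(ct/2) = c·sinh(λt/2)·cos(ct/2)` has no solution `t > 0` with
`ct/2 ∈ (0, π]`, but has a solution `t > 0` with `ct/2 ∈ (π, 3π/2)`. -/
theorem sl2_first_symmetric_time (c : ℝ) (hc0 : 0 < c) (hc1 : c < 1) :
    (¬ ∃ t : ℝ, 0 < t ∧ c * t / 2 ∈ Set.Ioc 0 Real.pi ∧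
        Real.sqrt (1 - c ^ 2) * Real.cosh (Real.sqrt (1 - c ^ 2) * t / 2)
            * Real.sin (c * t / 2)
          = c * Real.sinh (Real.sqrt (1 - c ^ 2) * t / 2) * Real.cos (c * t / 2)) ∧
    (∃ t : ℝ, 0 < t ∧ c * t / 2 ∈ Set.Ioo Real.pi (3 * Real.pi / 2) ∧
        Real.sqrt (1 - c ^ 2) * Real.cosh (Real.sqrt (1 - c ^ 2) * t / 2)
            * Real.sin (c * t / 2)
          = c * Real.sinh (Real.sqrt (1 - c ^ 2) * t / 2) * Real.cos (c * t / 2)) := by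
  set l := √(1 - c ^ 2)
  have hl : 0 < l := sqrt_pos.2 (by nlinarith)
  have hk : 0 < l / c := div_pos hl hc0
  have hscale : ∀ t, l * t / 2 = l / c * (c * t / 2) := fun t => by field_simp
  simp only [hscale]
  constructor
  · rintro ⟨t, -, ⟨hu0, huπ⟩, heq⟩
    have hineq := mul_lt_mul_of_pos_left (sinh_mul_cos_lt_mul_cosh_mul_sin hk hu0 huπ) hc0
    rw [← mul_assoc, ← mul_assoc, ← mul_assoc, mul_div_cancel₀ l hc0.ne'] at hineq
    exact hineq.ne' heq
  · obtain ⟨u, hu, heq⟩ := exists_mem_Ioo_cosh_mul_sin_eq_sinh_mul_cos hl hc0 hk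
    have hcu : c * (2 * u / c) / 2 = u := by field_simp
    refine ⟨2 * u / c, div_pos (by linarith [hu.1, pi_pos]) hc0, ?_⟩
    rw [hcu]
    exact ⟨hu, heq⟩
end
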